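/- Let I and J be nonempty finite sets and let ε ≥ 0 and γ be real numbers with 2*ε < γ. Let 𝒫 be a set of maps P : I → J → ℝ such that for every P ∈ 𝒫 and every i ∈ I, 0 ≤ P i j ≤ 1 for all j and ∑_{j∈J} P i j = 1. Let U, Ũ : I → J → ℝ satisfy |U i j − Ũ i j| ≤ ε for all i, j. For a utility matrix V define the gain g_V(P, i) = ∑_{j} P i j * V i j − (1/|J|) ∑_{j} V i j. Assume that for every P ∈ 𝒫 and every i ∈ I, g_Ũ(P, i) ≥ γ. If P* ∈ 𝒫 maximizes ∏_{i∈I} g_Ũ(P, i) over 𝒫, then for every P ∈ 𝒫, ∏_{i∈I} g_U(P*, i) ≥ ((γ − 2ε)/(γ + 2ε))^{|I|} * ∏_{i∈I} g_U(P, i). -/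
import Mathlib


open Finset

/-- Gain of agent `i` under allocation `P` and utility matrix `V`: expected utility
minus the disagreement point (expected utility under uniform random assignment). -/
noncomputable def gain {I J : Type*} [Fintype J]
    (V : I → J → ℝ) (P : I → J → ℝ) (i : I) : ℝ :=
  ∑ j, P i j * V i j - (1 / (Fintype.card J : ℝ)) * ∑ j, V i j

theorem nsw_perturbation_core
    {I J : Type*} [Fintype I] [Fintype J] [Nonempty I] [Nonempty J]
    (ε γ : ℝ) (hε : 0 ≤ ε) (hγ : 2 * ε < γ)
    (Pset : Set (I → J → ℝ))
    (hfeas : ∀ P ∈ Pset, ∀ i : I, (∀ j : J, 0 ≤ P i j ∧ P i j ≤ 1) ∧ (∑ j, P i j = 1))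
    (U U' : I → J → ℝ)
    (hclose : ∀ i j, |U i j - U' i j| ≤ ε)
    (hgain : ∀ P ∈ Pset, ∀ i : I, γ ≤ gain U' P i)
    (Pstar : I → J → ℝ) (hPstar : Pstar ∈ Pset)
    (hmax : ∀ P ∈ Pset, ∏ i, gain U' P i ≤ ∏ i, gain U' Pstar i) :
    ∀ P ∈ Pset,
      ((γ - 2 * ε) / (γ + 2 * ε)) ^ (Fintype.card I) * ∏ i, gain U P i
        ≤ ∏ i, gain U Pstar i := by
  have hγpos : 0 < γ := lt_of_le_of_lt (by linarith) hγ
  have hJpos : 0 < (Fintype.card J : ℝ) := by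
    exact_mod_cast Fintype.card_pos
  -- closeness of gains
  have key : ∀ P ∈ Pset, ∀ i : I, |gain U P i - gain U' P i| ≤ 2 * ε := by
    intro P hP i
    obtain ⟨hPij, hPsum⟩ := hfeas P hP i
    have h1 : |∑ j, P i j * U i j - ∑ j, P i j * U' i j| ≤ ε := by
      rw [← Finset.sum_sub_distrib]
      calc |∑ j, (P i j * U i j - P i j * U' i j)|
          ≤ ∑ j, |P i j * U i j - P i j * U' i j| := Finset.abs_sum_le_sum_abs _ _
        _ ≤ ∑ j, P i j * ε := by
            apply Finset.sum_le_sum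
            intro j _
            rw [← mul_sub, abs_mul, abs_of_nonneg (hPij j).1]
            exact mul_le_mul_of_nonneg_left (hclose i j) (hPij j).1
        _ = ε := by rw [← Finset.sum_mul, hPsum, one_mul]
    have h2 : |(1 / (Fintype.card J : ℝ)) * ∑ j, U i j
        - (1 / (Fintype.card J : ℝ)) * ∑ j, U' i j| ≤ ε := by
      rw [← mul_sub, abs_mul, ← Finset.sum_sub_distrib]
      have : |∑ j, (U i j - U' i j)| ≤ (Fintype.card J : ℝ) * ε := by
        calc |∑ j, (U i j - U' i j)| ≤ ∑ j, |U i j - U' i j| :=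
              Finset.abs_sum_le_sum_abs _ _
          _ ≤ ∑ _j : J, ε := Finset.sum_le_sum fun j _ => hclose i j
          _ = (Fintype.card J : ℝ) * ε := by simp [mul_comm]
      have habs : |1 / (Fintype.card J : ℝ)| = 1 / (Fintype.card J : ℝ) :=
        abs_of_pos (by positivity)
      rw [habs]
      calc 1 / (Fintype.card J : ℝ) * |∑ j, (U i j - U' i j)|
          ≤ 1 / (Fintype.card J : ℝ) * ((Fintype.card J : ℝ) * ε) := by
            exact mul_le_mul_of_nonneg_left this (by positivity)
        _ = ε := by field_simp
    have hexp : gain U P i - gain U' P i =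
        (∑ j, P i j * U i j - ∑ j, P i j * U' i j)
        - ((1 / (Fintype.card J : ℝ)) * ∑ j, U i j
          - (1 / (Fintype.card J : ℝ)) * ∑ j, U' i j) := by
      simp [gain]; ring
    rw [hexp]
    calc |_| ≤ _ := abs_sub _ _
      _ ≤ 2 * ε := by linarith
  intro P hP
  set n := Fintype.card I
  -- pointwise bounds
  have hup : ∀ i, gain U P i ≤ (γ + 2 * ε) / γ * gain U' P i := by
    intro i
    have h := abs_le.mp (key P hP i)
    have hg := hgain P hP i
    have : gain U P i ≤ gain U' P i + 2 * ε := by linarith [h.2]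
    have h2 : gain U' P i + 2 * ε ≤ (γ + 2 * ε) / γ * gain U' P i := by
      rw [div_mul_eq_mul_div, le_div_iff₀ hγpos]
      nlinarith
    linarith
  have hdown : ∀ i, (γ - 2 * ε) / γ * gain U' Pstar i ≤ gain U Pstar i := by
    intro i
    have h := abs_le.mp (key Pstar hPstar i)
    have hg := hgain Pstar hPstar i
    have h2 : (γ - 2 * ε) / γ * gain U' Pstar i ≤ gain U' Pstar i - 2 * ε := by
      rw [div_mul_eq_mul_div, div_le_iff₀ hγpos]
      nlinarith
    linarith
  have hUPpos : ∀ i, 0 ≤ gain U P i := by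
    intro i
    have h := abs_le.mp (key P hP i)
    have hg := hgain P hP i
    linarith [h.1]
  -- product bounds
  have step1 : ∏ i, gain U P i ≤ ∏ i, ((γ + 2 * ε) / γ * gain U' P i) :=
    Finset.prod_le_prod (fun i _ => hUPpos i) (fun i _ => hup i)
  have step3 : ∏ i, ((γ - 2 * ε) / γ * gain U' Pstar i) ≤ ∏ i, gain U Pstar i := by
    apply Finset.prod_le_prod
    · intro i _
      have hg := hgain Pstar hPstar i
      have h0 : 0 ≤ (γ - 2 * ε) / γ := div_nonneg (by linarith) hγpos.le
      exact mul_nonneg h0 (by linarith)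
    · intro i _; exact hdown i
  rw [Finset.prod_mul_distrib, Finset.prod_const] at step1 step3
  simp only [Finset.card_univ] at step1 step3
  have step2 := hmax P hP
  have hc1 : (0:ℝ) ≤ ((γ - 2 * ε) / (γ + 2 * ε)) ^ n := pow_nonneg (div_nonneg (by linarith) (by linarith)) n
  have hc2 : (0:ℝ) < ((γ + 2 * ε) / γ) ^ n := by positivity
  have hcomb : ((γ - 2 * ε) / (γ + 2 * ε)) ^ n * (((γ + 2 * ε) / γ) ^ n) =
      ((γ - 2 * ε) / γ) ^ n := by
    rw [← mul_pow]
    congr 1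
    field_simp
  calc ((γ - 2 * ε) / (γ + 2 * ε)) ^ n * ∏ i, gain U P i
      ≤ ((γ - 2 * ε) / (γ + 2 * ε)) ^ n * (((γ + 2 * ε) / γ) ^ n * ∏ i, gain U' P i) :=
        mul_le_mul_of_nonneg_left step1 hc1
    _ = ((γ - 2 * ε) / γ) ^ n * ∏ i, gain U' P i := by rw [← mul_assoc, hcomb]
    _ ≤ ((γ - 2 * ε) / γ) ^ n * ∏ i, gain U' Pstar i := by
        exact mul_le_mul_of_nonneg_left step2 (pow_nonneg (div_nonneg (by linarith) hγpos.le) n)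
    _ ≤ ∏ i, gain U Pstar i := step3
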